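/- Optimal leader value in the Tantrum game: consider the n-fold repetition of the stage game where the follower chooses accede (payoffs (q₁, -q₂) with q₁ > 0 and q₂ > 1) or refuse, after which the leader chooses payoff (0,0) or (-1,-1); payoffs are summed across stages. If n - ⌊n/q₂⌋ ≥ q₂, then the optimal SEFCE leader payoff equals q₁ · n/q₂. -/

import Mathlib

/-!
Upper bound: the EPF of `tantrum q₁ q₂ k a b` lies below the concave function equal to
`a + (q₁ / q₂) (b - μ)` for `μ ≥ b - k` and to `⊥` below. Every accession moves the leader and
the follower along this line, a punishment lowers both payoffs, and at a follower node the
truncation at the follower's grim threat `b - (k + 1)` keeps the accede branch inside the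
half-line; concavity lets the bound pass through the envelopes. At the root, `μ ≥ -n` gives
`q₁ n / q₂`.

Lower bound: with `m = ⌊n / q₂⌋₊`, the follower accedes in the first `m` stages and then, in
one more stage, accedes with probability `t = n / q₂ - m` and otherwise refuses and is
forgiven, ending at the follower payoff `-n`. Each recommendation is enforceable since the
follower's payoff never falls below its threat; in the randomised stage this is exactly
`n - m ≥ q₂`.
-/

/-- A finite two-player perfect-information game tree: leaves carry payoffs
`(r₁, r₂)`; internal nodes belong to the leader (`isLeader = true`) or the
follower, and have a nonempty (finite) family of children. -/
inductive GTree : Type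
  | leaf (r₁ r₂ : ℝ) : GTree
  | node (isLeader : Bool) (n : ℕ) (children : Fin (n + 1) → GTree) : GTree

/-- Follower's backward-induction value against the grim (follower-payoff-minimizing)
leader strategy. -/
noncomputable def GTree.grim : GTree → ℝ
  | .leaf _ r₂ => r₂
  | .node isLeader _ c =>
      if isLeader then
        Finset.univ.inf' Finset.univ_nonempty (fun i => (c i).grim)
      else
        Finset.univ.sup' Finset.univ_nonempty (fun i => (c i).grim)

/-- Follower's backward-induction value under the joint altruistic
(follower-payoff-maximizing) strategy profile. -/
noncomputable def GTree.alt : GTree → ℝ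
  | .leaf _ r₂ => r₂
  | .node _ _ c => Finset.univ.sup' Finset.univ_nonempty (fun i => (c i).alt)

def ConcaveE (g : ℝ → EReal) : Prop :=
  ∀ x y t : ℝ, 0 ≤ t → t ≤ 1 →
    (t : EReal) * g x + ((1 - t : ℝ) : EReal) * g y ≤ g (t * x + (1 - t) * y)

/-- Upper concave envelope of an extended-real-valued function. -/
noncomputable def concE (f : ℝ → EReal) : ℝ → EReal :=
  fun μ => ⨅ h : {h : ℝ → EReal // ConcaveE h ∧ ∀ x, f x ≤ h x}, (h : ℝ → EReal) μ

/-- Left truncation at an extended-real threshold. -/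
noncomputable def truncE' (g : ℝ → EReal) (t : EReal) : ℝ → EReal :=
  fun μ => if t ≤ (μ : EReal) then g μ else ⊥

/-- Minimum required incentive of the child `i` among the family `c`:
the maximum grim value over the *other* children (`⊥` if there are none). -/
noncomputable def tauOf {n : ℕ} (c : Fin (n + 1) → GTree) (i : Fin (n + 1)) : EReal :=
  ⨆ (j : Fin (n + 1)) (_ : j ≠ i), ((c j).grim : EReal)

/-- The Enforceable Payoff Frontier (EPF), defined by backward induction:
degenerate at leaves; upper concave envelope of the children's EPFs at leader
nodes; upper concave envelope of the left-truncated children's EPFs at follower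
nodes. -/
noncomputable def GTree.epf : GTree → ℝ → EReal
  | .leaf r₁ r₂ => fun μ => if μ = r₂ then (r₁ : EReal) else ⊥
  | .node isLeader _ c =>
      if isLeader then
        concE (fun μ => ⨆ i, (c i).epf μ)
      else
        concE (fun μ => ⨆ i, truncE' ((c i).epf) (tauOf c i) μ)

/-- Number of leaves of the subtree. -/
def GTree.numLeaves : GTree → ℕ
  | .leaf _ _ => 1
  | .node _ _ c => ∑ i, (c i).numLeaves

/-- The `n`-fold Tantrum game, with accumulated payoffs `(a, b)` so far: at each
stage the follower either accedes (payoffs `(q₁, -q₂)` added) or refuses, after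
which the leader chooses either the `(0,0)` or the `(-1,-1)` outcome for the
stage; payoffs are summed across stages and paid at the leaves. -/
noncomputable def tantrum (q₁ q₂ : ℝ) : ℕ → ℝ → ℝ → GTree
  | 0, a, b => .leaf a b
  | n + 1, a, b => .node false 1 (fun i =>
      if i = 0 then tantrum q₁ q₂ n (a + q₁) (b - q₂)
      else .node true 1 (fun j =>
        if j = 0 then tantrum q₁ q₂ n a b
        else tantrum q₁ q₂ n (a - 1) (b - 1)))

lemma le_concE (f : ℝ → EReal) (μ : ℝ) : f μ ≤ concE f μ :=
  le_iInf fun h => h.2.2 μ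

lemma concE_le {f h : ℝ → EReal} (hh : ConcaveE h) (hfh : f ≤ h) : concE f ≤ h :=
  fun μ => iInf_le (fun g : {h : ℝ → EReal // ConcaveE h ∧ ∀ x, f x ≤ h x} => g.1 μ) ⟨h, hh, hfh⟩

lemma coe_chord_le_concE {f : ℝ → EReal} {x y u v t : ℝ} (hu : (u : EReal) ≤ f x)
    (hv : (v : EReal) ≤ f y) (ht₀ : 0 ≤ t) (ht₁ : t ≤ 1) :
    ((t * u + (1 - t) * v : ℝ) : EReal) ≤ concE f (t * x + (1 - t) * y) := by
  refine le_iInf fun ⟨h, hh, hfh⟩ => ?_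
  calc ((t * u + (1 - t) * v : ℝ) : EReal)
      = (t : EReal) * u + ((1 - t : ℝ) : EReal) * v := by push_cast; rfl
    _ ≤ (t : EReal) * h x + ((1 - t : ℝ) : EReal) * h y := by
        gcongr
        exacts [hu.trans (hfh x), hv.trans (hfh y)]
    _ ≤ h (t * x + (1 - t) * y) := hh x y t ht₀ ht₁

lemma concaveE_coe_affine (a s b : ℝ) : ConcaveE (fun μ => ((a + s * (b - μ) : ℝ) : EReal)) := by
  intro x y t _ _
  simp only [← EReal.coe_mul, ← EReal.coe_add, EReal.coe_le_coe_iff]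
  exact le_of_eq (by ring)

lemma truncE'_le_self (g : ℝ → EReal) (t : EReal) : truncE' g t ≤ g := by
  intro μ
  unfold truncE'
  split_ifs
  exacts [le_rfl, bot_le]

lemma truncE'_of_le {g : ℝ → EReal} {t : EReal} {μ : ℝ} (h : t ≤ μ) : truncE' g t μ = g μ :=
  if_pos h

lemma truncE'_of_lt {g : ℝ → EReal} {t : EReal} {μ : ℝ} (h : (μ : EReal) < t) :
    truncE' g t μ = ⊥ :=
  if_neg h.not_ge

lemma truncE'_mono {g g' : ℝ → EReal} {t t' : EReal} (hg : g ≤ g') (ht : t' ≤ t) :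
    truncE' g t ≤ truncE' g' t' := by
  intro μ
  unfold truncE'
  split_ifs with h h'
  · exact hg μ
  · exact absurd (ht.trans h) h'
  all_goals exact bot_le

lemma ConcaveE.truncE' {g : ℝ → EReal} (hg : ConcaveE g) (c : EReal) :
    ConcaveE (truncE' g c) := by
  intro x y t ht₀ ht₁
  rcases ht₀.eq_or_lt with rfl | ht₀
  · simp
  rcases ht₁.eq_or_lt with rfl | ht₁
  · simp
  by_cases hx : c ≤ x
  · by_cases hy : c ≤ y
    · have hmin : min x y ≤ t * x + (1 - t) * y := by
        rcases le_total x y with h | h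
        · rw [min_eq_left h]; nlinarith
        · rw [min_eq_right h]; nlinarith
      have hxy : c ≤ ((t * x + (1 - t) * y : ℝ) : EReal) :=
        (le_min hx hy).trans (EReal.coe_le_coe_iff.2 hmin)
      simpa only [truncE'_of_le hx, truncE'_of_le hy, truncE'_of_le hxy] using
        hg x y t ht₀.le ht₁.le
    · rw [truncE'_of_lt (not_le.1 hy), EReal.coe_mul_bot_of_pos (sub_pos.2 ht₁), EReal.add_bot]
      exact bot_le
  · rw [truncE'_of_lt (not_le.1 hx), EReal.coe_mul_bot_of_pos ht₀, EReal.bot_add]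
    exact bot_le

lemma tauOf_two {c : Fin 2 → GTree} {i j : Fin 2} (hij : j ≠ i) : tauOf c i = (c j).grim := by
  refine le_antisymm (iSup₂_le fun k hk => ?_)
    (le_iSup₂_of_le (f := fun k (_ : k ≠ i) => ((c k).grim : EReal)) j hij le_rfl)
  obtain rfl : k = j := by omega
  exact le_rfl

namespace GTree

lemma epf_node_false {n : ℕ} (c : Fin (n + 1) → GTree) :
    (node false n c).epf = concE (fun μ => ⨆ i, truncE' (c i).epf (tauOf c i) μ) := by
  simp [epf]

lemma epf_node_true {n : ℕ} (c : Fin (n + 1) → GTree) :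
    (node true n c).epf = concE (fun μ => ⨆ i, (c i).epf μ) := by
  simp [epf]

lemma le_epf_node_false {n : ℕ} {c : Fin (n + 1) → GTree} {i : Fin (n + 1)} {μ : ℝ}
    (hμ : tauOf c i ≤ μ) : (c i).epf μ ≤ (node false n c).epf μ := by
  rw [epf_node_false, ← truncE'_of_le (g := (c i).epf) hμ]
  exact (le_concE _ μ).trans' (le_iSup_of_le i le_rfl)

lemma le_epf_node_true {n : ℕ} (c : Fin (n + 1) → GTree) (i : Fin (n + 1)) :
    (c i).epf ≤ (node true n c).epf := by
  rw [epf_node_true]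
  exact fun μ => (le_concE _ μ).trans' (le_iSup_of_le i le_rfl)

lemma epf_node_false_le {n : ℕ} {c : Fin (n + 1) → GTree} {h : ℝ → EReal} (hh : ConcaveE h)
    (hc : ∀ i, truncE' (c i).epf (tauOf c i) ≤ h) : (node false n c).epf ≤ h := by
  rw [epf_node_false]
  exact concE_le hh fun μ => iSup_le fun i => hc i μ

lemma epf_node_true_le {n : ℕ} {c : Fin (n + 1) → GTree} {h : ℝ → EReal} (hh : ConcaveE h)
    (hc : ∀ i, (c i).epf ≤ h) : (node true n c).epf ≤ h := by
  rw [epf_node_true]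
  exact concE_le hh fun μ => iSup_le fun i => hc i μ

lemma coe_chord_le_epf_node_false {n : ℕ} {c : Fin (n + 1) → GTree} {i j : Fin (n + 1)}
    {x y u v t : ℝ} (hx : tauOf c i ≤ x) (hy : tauOf c j ≤ y)
    (hu : (u : EReal) ≤ (c i).epf x) (hv : (v : EReal) ≤ (c j).epf y)
    (ht₀ : 0 ≤ t) (ht₁ : t ≤ 1) :
    ((t * u + (1 - t) * v : ℝ) : EReal) ≤ (node false n c).epf (t * x + (1 - t) * y) := by
  rw [epf_node_false]
  refine coe_chord_le_concE ?_ ?_ ht₀ ht₁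
  · exact le_iSup_of_le i (by rwa [truncE'_of_le hx])
  · exact le_iSup_of_le j (by rwa [truncE'_of_le hy])

lemma grim_node_false_two (c : Fin 2 → GTree) :
    (node false 1 c).grim = max (c 0).grim (c 1).grim := by
  simp [grim, Fin.univ_succ]

lemma grim_node_true_two (c : Fin 2 → GTree) :
    (node true 1 c).grim = min (c 0).grim (c 1).grim := by
  simp [grim, Fin.univ_succ]

end GTree

section Tantrum

variable {q₁ q₂ : ℝ}

noncomputable def tantrumChoices (q₁ q₂ : ℝ) (k : ℕ) (a b : ℝ) : Fin 2 → GTree :=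
  ![tantrum q₁ q₂ k (a + q₁) (b - q₂),
    .node true 1 ![tantrum q₁ q₂ k a b, tantrum q₁ q₂ k (a - 1) (b - 1)]]

@[simp]
lemma tantrumChoices_zero (q₁ q₂ : ℝ) (k : ℕ) (a b : ℝ) :
    tantrumChoices q₁ q₂ k a b 0 = tantrum q₁ q₂ k (a + q₁) (b - q₂) :=
  rfl

@[simp]
lemma tantrumChoices_one (q₁ q₂ : ℝ) (k : ℕ) (a b : ℝ) :
    tantrumChoices q₁ q₂ k a b 1 =
      .node true 1 ![tantrum q₁ q₂ k a b, tantrum q₁ q₂ k (a - 1) (b - 1)] :=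
  rfl

lemma tantrum_zero (q₁ q₂ a b : ℝ) : tantrum q₁ q₂ 0 a b = .leaf a b := by
  rw [tantrum]

lemma tantrum_succ (q₁ q₂ : ℝ) (k : ℕ) (a b : ℝ) :
    tantrum q₁ q₂ (k + 1) a b = .node false 1 (tantrumChoices q₁ q₂ k a b) := by
  rw [tantrum]
  congr 1
  funext i
  fin_cases i
  · rfl
  · refine congrArg (GTree.node true 1) (funext fun j => ?_)
    fin_cases j <;> rfl

lemma grim_tantrum (hq₂ : 1 ≤ q₂) (k : ℕ) (a b : ℝ) : (tantrum q₁ q₂ k a b).grim = b - k := by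
  induction k generalizing a b with
  | zero => simp [tantrum_zero, GTree.grim]
  | succ k ih =>
    rw [tantrum_succ, GTree.grim_node_false_two, tantrumChoices_zero, tantrumChoices_one,
      GTree.grim_node_true_two]
    simp only [ih, Matrix.cons_val_zero, Matrix.cons_val_one]
    rw [min_eq_right (by linarith), max_eq_right (by linarith)]
    push_cast
    ring

lemma tauOf_tantrumChoices_zero (hq₂ : 1 ≤ q₂) (k : ℕ) (a b : ℝ) :
    tauOf (tantrumChoices q₁ q₂ k a b) 0 = ((b - (k + 1 : ℕ) : ℝ) : EReal) := by
  rw [tauOf_two (j := 1) (by decide), tantrumChoices_one, GTree.grim_node_true_two]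
  simp only [Matrix.cons_val_zero, Matrix.cons_val_one, grim_tantrum hq₂]
  rw [min_eq_right (by linarith)]
  congr 1
  push_cast
  ring

lemma tauOf_tantrumChoices_one (hq₂ : 1 ≤ q₂) (k : ℕ) (a b : ℝ) :
    tauOf (tantrumChoices q₁ q₂ k a b) 1 = ((b - q₂ - k : ℝ) : EReal) := by
  rw [tauOf_two (j := 0) (by decide), tantrumChoices_zero, grim_tantrum hq₂]

lemma epf_tantrum_le (hq₁ : 0 ≤ q₁) (hq₂ : 1 ≤ q₂) (k : ℕ) (a b : ℝ) :
    (tantrum q₁ q₂ k a b).epf ≤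
      truncE' (fun μ => ((a + q₁ / q₂ * (b - μ) : ℝ) : EReal)) ((b - k : ℝ) : EReal) := by
  induction k generalizing a b with
  | zero =>
    intro μ
    simp only [tantrum_zero, GTree.epf]
    split_ifs with h
    · rw [truncE'_of_le (by simp [h])]
      simp [h]
    · exact bot_le
  | succ k ih =>
    set line := fun μ => ((a + q₁ / q₂ * (b - μ) : ℝ) : EReal)
    have hconcave : ConcaveE (truncE' line ((b - (k + 1 : ℕ) : ℝ) : EReal)) :=
      (concaveE_coe_affine a _ b).truncE' _
    have haccede : (tantrum q₁ q₂ k (a + q₁) (b - q₂)).epf ≤ line := by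
      refine (ih _ _).trans ((truncE'_le_self _ _).trans fun μ => ?_)
      rw [EReal.coe_le_coe_iff]
      field_simp
      linarith
    have hforgive : (tantrum q₁ q₂ k a b).epf ≤ truncE' line ((b - (k + 1 : ℕ) : ℝ) : EReal) :=
      (ih a b).trans (truncE'_mono le_rfl (EReal.coe_le_coe_iff.2 (by push_cast; linarith)))
    have hpunish :
        (tantrum q₁ q₂ k (a - 1) (b - 1)).epf ≤ truncE' line ((b - (k + 1 : ℕ) : ℝ) : EReal) := by
      refine (ih _ _).trans (truncE'_mono (fun μ => ?_) (EReal.coe_le_coe_iff.2 ?_))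
      · have : 0 ≤ q₁ / q₂ := div_nonneg hq₁ (by linarith)
        rw [EReal.coe_le_coe_iff]
        nlinarith
      · push_cast
        linarith
    rw [tantrum_succ]
    refine GTree.epf_node_false_le hconcave (Fin.forall_fin_two.2 ⟨?_, ?_⟩)
    · rw [tauOf_tantrumChoices_zero hq₂]
      exact truncE'_mono haccede le_rfl
    · exact (truncE'_le_self _ _).trans
        (GTree.epf_node_true_le hconcave (Fin.forall_fin_two.2 ⟨hforgive, hpunish⟩))

lemma coe_le_epf_tantrum_self (hq₂ : 1 ≤ q₂) (k : ℕ) (a b : ℝ) :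
    (a : EReal) ≤ (tantrum q₁ q₂ k a b).epf b := by
  induction k generalizing a b with
  | zero => simp [tantrum_zero, GTree.epf]
  | succ k ih =>
    rw [tantrum_succ]
    refine le_trans ?_ (GTree.le_epf_node_false (i := 1) ?_)
    · rw [tantrumChoices_one]
      exact (GTree.le_epf_node_true _ 0 b).trans' (ih a b)
    · rw [tauOf_tantrumChoices_one hq₂, EReal.coe_le_coe_iff]
      linarith [(k.cast_nonneg : (0 : ℝ) ≤ k)]

lemma epf_tantrum_accede_le (hq₂ : 1 ≤ q₂) (k m : ℕ) (a b : ℝ) {μ : ℝ}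
    (hμ : b - (k + m : ℕ) ≤ μ) :
    (tantrum q₁ q₂ k (a + m * q₁) (b - m * q₂)).epf μ ≤ (tantrum q₁ q₂ (k + m) a b).epf μ := by
  induction m generalizing a b with
  | zero => simp
  | succ m ih =>
    push_cast at hμ
    calc (tantrum q₁ q₂ k (a + (m + 1 : ℕ) * q₁) (b - (m + 1 : ℕ) * q₂)).epf μ
        = (tantrum q₁ q₂ k (a + q₁ + m * q₁) (b - q₂ - m * q₂)).epf μ := by
          push_cast
          ring_nf
      _ ≤ (tantrum q₁ q₂ (k + m) (a + q₁) (b - q₂)).epf μ :=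
          ih _ _ (by push_cast; linarith)
      _ ≤ (tantrum q₁ q₂ (k + m + 1) a b).epf μ := by
          rw [tantrum_succ]
          refine GTree.le_epf_node_false (c := tantrumChoices q₁ q₂ (k + m) a b) (i := 0) ?_
          rw [tauOf_tantrumChoices_zero hq₂, EReal.coe_le_coe_iff]
          push_cast
          linarith

lemma coe_le_epf_tantrum_mix (hq₂ : 1 ≤ q₂) {k : ℕ} (hk : q₂ ≤ k) {t : ℝ} (ht₀ : 0 ≤ t)
    (ht₁ : t ≤ 1) (a b : ℝ) :
    ((a + t * q₁ : ℝ) : EReal) ≤ (tantrum q₁ q₂ k a b).epf (b - t * q₂) := by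
  obtain ⟨k, rfl⟩ : ∃ k', k = k' + 1 :=
    Nat.exists_eq_succ_of_ne_zero (by rintro rfl; norm_num at hk; linarith)
  push_cast at hk
  have hmix := GTree.coe_chord_le_epf_node_false (c := tantrumChoices q₁ q₂ k a b) (i := 0)
    (j := 1) (x := b - q₂) (y := b) (u := a + q₁) (v := a) ?_ ?_
    (coe_le_epf_tantrum_self hq₂ k _ _)
    ((GTree.le_epf_node_true _ 0 b).trans' (coe_le_epf_tantrum_self hq₂ k a b)) ht₀ ht₁
  · rw [tantrum_succ]
    convert hmix using 2 <;> ring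
  · rw [tauOf_tantrumChoices_zero hq₂, EReal.coe_le_coe_iff]
    push_cast
    linarith
  · rw [tauOf_tantrumChoices_one hq₂, EReal.coe_le_coe_iff]
    linarith [(k.cast_nonneg : (0 : ℝ) ≤ k)]

lemma coe_le_epf_tantrum (hq₂ : 1 ≤ q₂) (n : ℕ) (hn : (n : ℝ) - ⌊(n : ℝ) / q₂⌋ ≥ q₂)
    (a b : ℝ) : ((a + q₁ * n / q₂ : ℝ) : EReal) ≤ (tantrum q₁ q₂ n a b).epf (b - n) := by
  have hq₂₀ : 0 < q₂ := by linarith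
  have hnq₂ : 0 ≤ (n : ℝ) / q₂ := by positivity
  set m := ⌊(n : ℝ) / q₂⌋₊
  set t := (n : ℝ) / q₂ - m
  have hm : (m : ℝ) = ⌊(n : ℝ) / q₂⌋ := natCast_floor_eq_intCast_floor hnq₂
  have hmn : m ≤ n := by
    have : (m : ℝ) ≤ n := (Nat.floor_le hnq₂).trans (div_le_self n.cast_nonneg hq₂)
    exact_mod_cast this
  have ht₀ : 0 ≤ t := sub_nonneg.2 (Nat.floor_le hnq₂)
  have ht₁ : t ≤ 1 := by linarith [Nat.lt_floor_add_one ((n : ℝ) / q₂)]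
  have hk : q₂ ≤ ((n - m : ℕ) : ℝ) := by
    push_cast [hmn]
    linarith
  have haccede := epf_tantrum_accede_le (q₁ := q₁) hq₂ (n - m) m a b (μ := b - n)
    (by rw [Nat.sub_add_cancel hmn])
  rw [Nat.sub_add_cancel hmn] at haccede
  calc ((a + q₁ * n / q₂ : ℝ) : EReal)
      = ((a + m * q₁ + t * q₁ : ℝ) : EReal) := by
        congr 1
        simp only [t]
        field_simp
        ring
    _ ≤ (tantrum q₁ q₂ (n - m) (a + m * q₁) (b - m * q₂)).epf (b - m * q₂ - t * q₂) :=
        coe_le_epf_tantrum_mix hq₂ hk ht₀ ht₁ _ _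
    _ = (tantrum q₁ q₂ (n - m) (a + m * q₁) (b - m * q₂)).epf (b - n) := by
        congr 1
        simp only [t]
        field_simp
        ring
    _ ≤ (tantrum q₁ q₂ n a b).epf (b - n) := haccede

end Tantrum

/-- Optimal leader value in the Tantrum game: the optimal SEFCE leader payoff (the
maximum of the EPF at the root) equals `q₁ · n / q₂`, provided
`n - ⌊n/q₂⌋ ≥ q₂`. -/
theorem tantrum_optimal_value (q₁ q₂ : ℝ) (hq₁ : 0 < q₁) (hq₂ : 1 < q₂) (n : ℕ)
    (hcond : (n : ℝ) - ⌊(n : ℝ) / q₂⌋ ≥ q₂) :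
    (⨆ μ : ℝ, (tantrum q₁ q₂ n 0 0).epf μ) = ((q₁ * n / q₂ : ℝ) : EReal) := by
  refine le_antisymm (iSup_le fun μ => ?_) ?_
  · refine (epf_tantrum_le hq₁.le hq₂.le n 0 0 μ).trans ?_
    unfold truncE'
    split_ifs with hμ
    · rw [EReal.coe_le_coe_iff] at hμ ⊢
      have : q₁ / q₂ * (0 - μ) ≤ q₁ / q₂ * n := by gcongr; linarith
      linarith [show q₁ / q₂ * n = q₁ * n / q₂ by ring]
    · exact bot_le
  · simpa using le_iSup_of_le ((0 : ℝ) - n) (coe_le_epf_tantrum (q₁ := q₁) hq₂.le n hcond 0 0)
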